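/- Let f ∈ W^{1,1}(B_r) where B_r ⊂ ℝ^n is a ball, and let k < l be real numbers. Then (l − k) · |{x ∈ B_r : f(x) > l}| ≤ C r^{n+1} / |{x ∈ B_r : f(x) < k}| · ∫_{{k < f < l}} |∇f| dx, where C depends only on n. -/

import Mathlib

/-!
Along the segment from a point `y` with `f y < k` to a point `x` with `l < f x`, the function
`f` must climb from `k` to `l` inside the level region `{k < f < l}`, so by the fundamental
theorem of calculus `l - k ≤ |x - y| ∫₀¹ |∇f| 1_{k < f < l}((1 - t) y + t x) dt`. Integrating over
`x ∈ {f > l}` and `y ∈ {f < k}` and exchanging the order of integration, for each `t` one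
integrates first in the variable whose coefficient is at least `1/2`; that affine change of
variables costs at most a factor `2ⁿ`, and the other variable contributes at most `|B_r|`.
-/

open MeasureTheory Real

noncomputable section

abbrev Rn (n : ℕ) := EuclideanSpace ℝ (Fin n)

open Set Module
open scoped ENNReal

theorem exists_Ioo_mapsTo_Ioo {g : ℝ → ℝ} {u v k l : ℝ} (huv : u ≤ v)
    (hg : ContinuousOn g (Icc u v)) (hu : g u ≤ k) (hv : l ≤ g v) (hkl : k < l) :
    ∃ a b, u ≤ a ∧ a < b ∧ b ≤ v ∧ g a ≤ k ∧ l ≤ g b ∧ MapsTo g (Ioo a b) (Ioo k l) := by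
  -- `b` is the first time `g` reaches `l`, and `a` the last time before `b` that `g ≤ k`.
  set T := Icc u v ∩ g ⁻¹' Ici l
  have hTb : BddBelow T := ⟨u, fun t ht ↦ ht.1.1⟩
  have hbT : sInf T ∈ T :=
    (hg.preimage_isClosed_of_isClosed isClosed_Icc isClosed_Ici).csInf_mem
      ⟨v, ⟨huv, le_rfl⟩, hv⟩ hTb
  set b := sInf T
  set S := Icc u b ∩ g ⁻¹' Iic k
  have hSb : BddAbove S := ⟨b, fun t ht ↦ ht.1.2⟩
  have haS : sSup S ∈ S :=
    ((hg.mono (Icc_subset_Icc_right hbT.1.2)).preimage_isClosed_of_isClosed isClosed_Icc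
      isClosed_Iic).csSup_mem ⟨u, ⟨le_rfl, hbT.1.1⟩, hu⟩ hSb
  set a := sSup S
  have hab : a < b := haS.1.2.lt_of_ne fun h ↦
    (hkl.trans_le (h ▸ hbT.2 : l ≤ g a)).not_ge haS.2
  refine ⟨a, b, haS.1.1, hab, hbT.1.2, haS.2, hbT.2, fun t ht ↦ ⟨?_, ?_⟩⟩
  · by_contra! hgt
    exact notMem_of_csSup_lt ht.1 hSb ⟨⟨haS.1.1.trans ht.1.le, ht.2.le⟩, hgt⟩
  · by_contra! hgt
    exact notMem_of_lt_csInf ht.2 hTb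
      ⟨⟨haS.1.1.trans ht.1.le, ht.2.le.trans hbT.1.2⟩, hgt⟩

theorem enorm_sub_le_lintegral_enorm_deriv {F : Type*} [NormedAddCommGroup F] [NormedSpace ℝ F]
    [CompleteSpace F] {g : ℝ → F} {a b : ℝ} (hab : a ≤ b)
    (hg : ∀ t ∈ Icc a b, DifferentiableAt ℝ g t) :
    ‖g b - g a‖ₑ ≤ ∫⁻ t in Ioo a b, ‖deriv g t‖ₑ := by
  by_cases htop : ∫⁻ t in Ioo a b, ‖deriv g t‖ₑ = ∞
  · simp [htop]
  have hint : IntegrableOn (deriv g) (Ioc a b) := by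
    rw [IntegrableOn, ← Measure.restrict_congr_set Ioo_ae_eq_Ioc]
    exact ⟨(stronglyMeasurable_deriv g).aestronglyMeasurable, lt_top_iff_ne_top.2 htop⟩
  have hftc : ∫ t in a..b, deriv g t = g b - g a :=
    intervalIntegral.integral_eq_sub_of_hasDerivAt
      (fun t ht ↦ (hg t (uIcc_of_le hab ▸ ht)).hasDerivAt)
      ((intervalIntegrable_iff_integrableOn_Ioc_of_le hab).2 hint)
  rw [← hftc, intervalIntegral.integral_of_le hab, Measure.restrict_congr_set Ioo_ae_eq_Ioc]
  exact enorm_integral_le_lintegral_enorm _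

theorem ofReal_sub_le_lintegral_enorm_deriv_preimage_Ioo {g : ℝ → ℝ} {u v k l : ℝ}
    (huv : u ≤ v) (hg : ∀ t ∈ Icc u v, DifferentiableAt ℝ g t) (hu : g u ≤ k) (hv : l ≤ g v) :
    ENNReal.ofReal (l - k) ≤ ∫⁻ t in Ioo u v ∩ g ⁻¹' Ioo k l, ‖deriv g t‖ₑ := by
  rcases le_or_gt l k with hlk | hkl
  · simp [ENNReal.ofReal_of_nonpos (sub_nonpos.2 hlk)]
  obtain ⟨a, b, hua, hab, hbv, hak, hlb, hmaps⟩ := exists_Ioo_mapsTo_Ioo huv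
    (fun t ht ↦ (hg t ht).continuousAt.continuousWithinAt) hu hv hkl
  calc ENNReal.ofReal (l - k) ≤ ENNReal.ofReal (g b - g a) :=
        ENNReal.ofReal_le_ofReal (by linarith)
    _ ≤ ‖g b - g a‖ₑ := Real.ofReal_le_enorm _
    _ ≤ ∫⁻ t in Ioo a b, ‖deriv g t‖ₑ := enorm_sub_le_lintegral_enorm_deriv hab.le
        fun t ht ↦ hg t ⟨hua.trans ht.1, ht.2.trans hbv⟩
    _ ≤ _ := lintegral_mono_set fun t ht ↦
        show t ∈ Ioo u v ∩ g ⁻¹' Ioo k l from ⟨⟨hua.trans_lt ht.1, ht.2.trans_le hbv⟩, hmaps ht⟩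

section NormedSpace

variable {E : Type*} [NormedAddCommGroup E] [NormedSpace ℝ E]

theorem ofReal_sub_le_mul_lintegral_segment {f : E → ℝ} {s : Set E} (hs : IsOpen s)
    (hsc : Convex ℝ s) (hf : DifferentiableOn ℝ f s) {x y : E} (hx : x ∈ s) (hy : y ∈ s)
    {k l : ℝ} (hy' : f y ≤ k) (hx' : l ≤ f x) :
    ENNReal.ofReal (l - k) ≤ ‖x - y‖ₑ * ∫⁻ t in Ioo (0 : ℝ) 1,
      {z ∈ s | k < f z ∧ f z < l}.indicator (fun z ↦ ‖fderiv ℝ f z‖ₑ) ((1 - t) • y + t • x) := by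
  set γ : ℝ → E := ⇑(AffineMap.lineMap (k := ℝ) y x)
  have hγ : ∀ t, γ t = (1 - t) • y + t • x := fun t ↦ AffineMap.lineMap_apply_module y x t
  have hγs : ∀ t ∈ Icc (0 : ℝ) 1, γ t ∈ s := fun t ht ↦ hsc.lineMap_mem hy hx ht
  have hderiv : ∀ t ∈ Icc (0 : ℝ) 1, HasDerivAt (f ∘ γ) (fderiv ℝ f (γ t) (x - y)) t :=
    fun t ht ↦ ((hf.differentiableAt (hs.mem_nhds (hγs t ht))).hasFDerivAt).comp_hasDerivAt t
      AffineMap.hasDerivAt_lineMap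
  set U := Ioo (0 : ℝ) 1 ∩ (f ∘ γ) ⁻¹' Ioo k l
  have hU : MeasurableSet U :=
    (ContinuousOn.isOpen_inter_preimage (fun t ht ↦ (hderiv t (Ioo_subset_Icc_self ht)
      ).continuousAt.continuousWithinAt) isOpen_Ioo isOpen_Ioo).measurableSet
  have hbound : ∀ t ∈ U, ‖deriv (f ∘ γ) t‖ₑ ≤ ‖x - y‖ₑ *
      {z ∈ s | k < f z ∧ f z < l}.indicator (fun z ↦ ‖fderiv ℝ f z‖ₑ) ((1 - t) • y + t • x) := by
    intro t ht
    have ht' := Ioo_subset_Icc_self ht.1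
    have hmem : γ t ∈ {z ∈ s | k < f z ∧ f z < l} := ⟨hγs t ht', ht.2⟩
    rw [← hγ, indicator_of_mem hmem, (hderiv t ht').deriv, mul_comm]
    exact (fderiv ℝ f (γ t)).le_opENorm (x - y)
  calc ENNReal.ofReal (l - k) ≤ ∫⁻ t in U, ‖deriv (f ∘ γ) t‖ₑ :=
        ofReal_sub_le_lintegral_enorm_deriv_preimage_Ioo zero_le_one
          (fun t ht ↦ (hderiv t ht).differentiableAt) (by simpa [γ]) (by simpa [γ])
    _ ≤ ∫⁻ t in U, ‖x - y‖ₑ * {z ∈ s | k < f z ∧ f z < l}.indicator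
          (fun z ↦ ‖fderiv ℝ f z‖ₑ) ((1 - t) • y + t • x) := setLIntegral_mono' hU hbound
    _ ≤ ∫⁻ t in Ioo (0 : ℝ) 1, ‖x - y‖ₑ * {z ∈ s | k < f z ∧ f z < l}.indicator
          (fun z ↦ ‖fderiv ℝ f z‖ₑ) ((1 - t) • y + t • x) := lintegral_mono_set inter_subset_left
    _ = _ := lintegral_const_mul' _ _ enorm_ne_top

variable [MeasurableSpace E] [BorelSpace E] [FiniteDimensional ℝ E] {μ : Measure E}
  [μ.IsAddHaarMeasure]

theorem lintegral_comp_smul_add (H : E → ℝ≥0∞) {c : ℝ} (hc : c ≠ 0) (v : E) :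
    ∫⁻ y, H (c • y + v) ∂μ = ENNReal.ofReal |(c ^ finrank ℝ E)⁻¹| * ∫⁻ z, H z ∂μ := by
  rw [← lintegral_add_right_eq_self H v, ← smul_eq_mul, ← lintegral_smul_measure,
    ← Measure.map_addHaar_smul μ hc]
  exact (lintegral_map_equiv (μ := μ) (fun z ↦ H (z + v)) (MeasurableEquiv.smul₀ c hc)).symm

theorem lintegral_comp_smul_add_le (H : E → ℝ≥0∞) {c : ℝ} (hc : 2⁻¹ ≤ c) (v : E) :
    ∫⁻ y, H (c • y + v) ∂μ ≤ 2 ^ finrank ℝ E * ∫⁻ z, H z ∂μ := by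
  have hc0 : 0 < c := lt_of_lt_of_le (by norm_num) hc
  rw [lintegral_comp_smul_add (μ := μ) H hc0.ne' v, abs_of_pos (by positivity), ← inv_pow]
  gcongr
  calc ENNReal.ofReal (c⁻¹ ^ finrank ℝ E) ≤ ENNReal.ofReal (2 ^ finrank ℝ E) := by
        gcongr
        exact inv_le_of_inv_le₀ (by norm_num) hc
    _ = 2 ^ finrank ℝ E := by simp

theorem lintegral_lintegral_segment_le {H : E → ℝ≥0∞} (hH : Measurable H) (A B : Set E)
    (t : ℝ) :
    ∫⁻ x in A, ∫⁻ y in B, H ((1 - t) • y + t • x) ∂μ ∂μ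
      ≤ 2 ^ finrank ℝ E * max (μ A) (μ B) * ∫⁻ z, H z ∂μ := by
  rcases le_total t 2⁻¹ with ht2 | ht2
  · have hinner : ∀ x, ∫⁻ y in B, H ((1 - t) • y + t • x) ∂μ ≤ 2 ^ finrank ℝ E * ∫⁻ z, H z ∂μ :=
      fun x ↦ (setLIntegral_le_lintegral _ _).trans
        (lintegral_comp_smul_add_le (μ := μ) H (by linarith) _)
    calc ∫⁻ x in A, ∫⁻ y in B, H ((1 - t) • y + t • x) ∂μ ∂μ
        ≤ ∫⁻ _ in A, 2 ^ finrank ℝ E * ∫⁻ z, H z ∂μ ∂μ := lintegral_mono hinner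
      _ ≤ _ := by
        rw [setLIntegral_const, mul_right_comm]
        gcongr
        exact le_max_left _ _
  · have hinner : ∀ y, ∫⁻ x in A, H ((1 - t) • y + t • x) ∂μ ≤ 2 ^ finrank ℝ E * ∫⁻ z, H z ∂μ :=
      fun y ↦ (setLIntegral_le_lintegral _ _).trans <| by
        simpa only [add_comm] using lintegral_comp_smul_add_le (μ := μ) H ht2 ((1 - t) • y)
    rw [lintegral_lintegral_swap (by fun_prop)]
    calc ∫⁻ y in B, ∫⁻ x in A, H ((1 - t) • y + t • x) ∂μ ∂μ
        ≤ ∫⁻ _ in B, 2 ^ finrank ℝ E * ∫⁻ z, H z ∂μ ∂μ := lintegral_mono hinner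
      _ ≤ _ := by
        rw [setLIntegral_const, mul_right_comm]
        gcongr
        exact le_max_right _ _

theorem lintegral_lintegral_lintegral_segment_le {H : E → ℝ≥0∞} (hH : Measurable H)
    (A B : Set E) :
    ∫⁻ x in A, ∫⁻ y in B, (∫⁻ t in Ioo (0 : ℝ) 1, H ((1 - t) • y + t • x)) ∂μ ∂μ
      ≤ 2 ^ finrank ℝ E * max (μ A) (μ B) * ∫⁻ z, H z ∂μ := by
  have hmeas : Measurable fun p : (E × ℝ) × E ↦ H ((1 - p.1.2) • p.2 + p.1.2 • p.1.1) :=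
    hH.comp (by fun_prop)
  calc ∫⁻ x in A, ∫⁻ y in B, (∫⁻ t in Ioo (0 : ℝ) 1, H ((1 - t) • y + t • x)) ∂μ ∂μ
      = ∫⁻ x in A, (∫⁻ t in Ioo (0 : ℝ) 1, ∫⁻ y in B, H ((1 - t) • y + t • x) ∂μ) ∂μ :=
        lintegral_congr fun x ↦ lintegral_lintegral_swap (by fun_prop)
    _ = ∫⁻ t in Ioo (0 : ℝ) 1, ∫⁻ x in A, ∫⁻ y in B, H ((1 - t) • y + t • x) ∂μ ∂μ :=
        lintegral_lintegral_swap hmeas.lintegral_prod_right'.aemeasurable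
    _ ≤ ∫⁻ _ in Ioo (0 : ℝ) 1, 2 ^ finrank ℝ E * max (μ A) (μ B) * ∫⁻ z, H z ∂μ :=
        lintegral_mono fun t ↦ lintegral_lintegral_segment_le hH A B t
    _ = 2 ^ finrank ℝ E * max (μ A) (μ B) * ∫⁻ z, H z ∂μ := by simp

theorem ofReal_sub_mul_measure_superlevel_mul_measure_sublevel_le {s : Set E} (hs : IsOpen s)
    (hsc : Convex ℝ s) {f : E → ℝ} (hf : DifferentiableOn ℝ f s) (k l : ℝ) :
    ENNReal.ofReal (l - k) * μ {x ∈ s | l < f x} * μ {x ∈ s | f x < k}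
      ≤ 2 ^ finrank ℝ E * Metric.ediam s * μ s *
        ∫⁻ x in {x ∈ s | k < f x ∧ f x < l}, ‖fderiv ℝ f x‖ₑ ∂μ := by
  set A := {x ∈ s | l < f x}
  set B := {x ∈ s | f x < k}
  set S := {x ∈ s | k < f x ∧ f x < l}
  have hA : MeasurableSet A := (hf.continuousOn.isOpen_inter_preimage hs isOpen_Ioi).measurableSet
  have hB : MeasurableSet B := (hf.continuousOn.isOpen_inter_preimage hs isOpen_Iio).measurableSet
  have hS : MeasurableSet S := (hf.continuousOn.isOpen_inter_preimage hs isOpen_Ioo).measurableSet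
  set H := S.indicator fun z ↦ ‖fderiv ℝ f z‖ₑ
  have hH : Measurable H := (measurable_fderiv ℝ f).enorm.indicator hS
  have hseg : ∀ x ∈ A, ∀ y ∈ B, ENNReal.ofReal (l - k) ≤
      Metric.ediam s * ∫⁻ t in Ioo (0 : ℝ) 1, H ((1 - t) • y + t • x) := fun x hx y hy ↦
    (ofReal_sub_le_mul_lintegral_segment hs hsc hf hx.1 hy.1 hy.2.le hx.2.le).trans <| by
      rw [← edist_eq_enorm_sub]
      gcongr
      exact Metric.edist_le_ediam_of_mem hx.1 hy.1
  calc ENNReal.ofReal (l - k) * μ A * μ B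
      = ∫⁻ x in A, ∫⁻ y in B, ENNReal.ofReal (l - k) ∂μ ∂μ := by
        simp only [setLIntegral_const, mul_right_comm]
    _ ≤ ∫⁻ x in A, ∫⁻ y in B,
          Metric.ediam s * (∫⁻ t in Ioo (0 : ℝ) 1, H ((1 - t) • y + t • x)) ∂μ ∂μ :=
        setLIntegral_mono' hA fun x hx ↦ setLIntegral_mono' hB fun y hy ↦ hseg x hx y hy
    _ = Metric.ediam s *
          ∫⁻ x in A, ∫⁻ y in B, (∫⁻ t in Ioo (0 : ℝ) 1, H ((1 - t) • y + t • x)) ∂μ ∂μ := by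
        rw [← lintegral_const_mul _ (by fun_prop)]
        refine lintegral_congr fun x ↦ ?_
        rw [← lintegral_const_mul _ (by fun_prop)]
    _ ≤ Metric.ediam s * (2 ^ finrank ℝ E * max (μ A) (μ B) * ∫⁻ z, H z ∂μ) := by
        gcongr
        exact lintegral_lintegral_lintegral_segment_le hH A B
    _ ≤ 2 ^ finrank ℝ E * Metric.ediam s * μ s * ∫⁻ x in S, ‖fderiv ℝ f x‖ₑ ∂μ := by
        rw [lintegral_indicator hS, ← mul_assoc, ← mul_assoc, mul_comm (Metric.ediam s)]
        gcongr
        exact max_le (measure_mono (μ := μ) (sep_subset _ _)) (measure_mono (sep_subset _ _))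

end NormedSpace

/-- De Giorgi's isoperimetric lemma. -/
theorem de_giorgi_isoperimetric (n : ℕ) :
    ∃ C > (0 : ℝ), ∀ (r k l : ℝ) (x0 : Rn n) (f : Rn n → ℝ),
      0 < r → k < l →
      DifferentiableOn ℝ f (Metric.ball x0 r) →
      IntegrableOn (fun x => ‖fderiv ℝ f x‖) (Metric.ball x0 r) →
      0 < (volume {x ∈ Metric.ball x0 r | f x < k}).toReal →
      (l - k) * (volume {x ∈ Metric.ball x0 r | l < f x}).toReal
        ≤ C * r ^ (n + 1) / (volume {x ∈ Metric.ball x0 r | f x < k}).toReal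
          * ∫ x in {x ∈ Metric.ball x0 r | k < f x ∧ f x < l}, ‖fderiv ℝ f x‖ := by
  set ω := (volume (Metric.ball (0 : Rn n) 1)).toReal
  have hω : 0 < ω :=
    ENNReal.toReal_pos (Metric.measure_ball_pos _ _ one_pos).ne' measure_ball_lt_top.ne
  refine ⟨2 ^ (n + 1) * ω, by positivity, fun r k l x0 f hr hkl hf hint hk ↦ ?_⟩
  set S := {x ∈ Metric.ball x0 r | k < f x ∧ f x < l}
  set I := ∫ x in S, ‖fderiv ℝ f x‖
  have hball : volume (Metric.ball x0 r) = ENNReal.ofReal (r ^ n * ω) := by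
    rw [Measure.addHaar_ball_of_pos _ _ hr, finrank_euclideanSpace_fin,
      ENNReal.ofReal_mul (by positivity), ENNReal.ofReal_toReal measure_ball_lt_top.ne]
  have hI : ∫⁻ x in S, ‖fderiv ℝ f x‖ₑ = ENNReal.ofReal I :=
    (ofReal_integral_norm_eq_lintegral_enorm ((integrable_norm_iff
      (measurable_fderiv ℝ f).aestronglyMeasurable).1 (hint.mono_set (sep_subset _ _)))).symm
  have hI0 : 0 ≤ I := integral_nonneg fun _ ↦ norm_nonneg _
  have hdiam : (Metric.ediam (Metric.ball x0 r)).toReal ≤ 2 * r := Metric.diam_ball hr.le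
  have key := ENNReal.toReal_mono ?_ <|
    ofReal_sub_mul_measure_superlevel_mul_measure_sublevel_le (μ := volume) Metric.isOpen_ball
      (convex_ball x0 r) hf k l
  · rw [finrank_euclideanSpace_fin, hball, hI] at key
    simp only [ENNReal.toReal_mul, ENNReal.toReal_pow, ENNReal.toReal_ofReal (sub_nonneg.2 hkl.le),
      ENNReal.toReal_ofReal (by positivity : 0 ≤ r ^ n * ω), ENNReal.toReal_ofReal hI0,
      ENNReal.toReal_ofNat] at key
    rw [div_mul_eq_mul_div, le_div_iff₀ hk]
    calc _ ≤ _ := key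
      _ ≤ 2 ^ n * (2 * r) * (r ^ n * ω) * I := by gcongr
      _ = _ := by ring
  · have := (Metric.isBounded_ball (x := x0) (r := r)).ediam_ne_top
    rw [hball, hI]
    finiteness
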